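/- arXiv:1402.5476 — 2 statements merged into one kernel-verified Lean document; each statement's English description precedes it below -/
import Mathlib

section
/- Let F : Ω → L(K, H) be holomorphic with h := F*F invertible, and set P := F·h^{-1}·F*. Then P is an extended holomorphic curve, i.e. (∂̄P(λ))·P(λ) = 0 for all λ ∈ Ω (equivalently ∂̄P = P·∂̄P). -/
/-!
On `Ω` the identities `P F = F` and `P P = P` hold, and `P` is real-differentiable.
Applying the Leibniz rule for `∂̄` to them and using `∂̄F = 0` gives `(∂̄P) F = 0`, hence
`(∂̄P) P = (∂̄P) F h⁻¹ F* = 0`, and then `∂̄P = (∂̄P) P + P ∂̄P = P ∂̄P`.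
-/

open Complex ContinuousLinearMap

/-- Wirtinger derivative ∂ = ∂/∂λ. -/
noncomputable def pd {E : Type*} [NormedAddCommGroup E] [NormedSpace ℂ E]
    (f : ℂ → E) : ℂ → E :=
  fun z => (2⁻¹ : ℂ) • (fderiv ℝ f z 1 - Complex.I • fderiv ℝ f z Complex.I)

/-- Wirtinger derivative ∂̄ = ∂/∂λ̄. -/
noncomputable def pdbar {E : Type*} [NormedAddCommGroup E] [NormedSpace ℂ E]
    (f : ℂ → E) : ℂ → E :=
  fun z => (2⁻¹ : ℂ) • (fderiv ℝ f z 1 + Complex.I • fderiv ℝ f z Complex.I)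

open Filter Topology

section RestrictScalars

variable {𝕜 𝕜' : Type*} [NontriviallyNormedField 𝕜] [NontriviallyNormedField 𝕜']
  [NormedAlgebra 𝕜 𝕜']
  {E : Type*} [NormedAddCommGroup E] [NormedSpace 𝕜 E]
  {F G H : Type*} [NormedAddCommGroup F] [NormedSpace 𝕜' F]
  [NormedAddCommGroup G] [NormedSpace 𝕜' G] [NormedSpace 𝕜 G] [IsScalarTower 𝕜 𝕜' G]
  [NormedAddCommGroup H] [NormedSpace 𝕜' H] [NormedSpace 𝕜 H] [IsScalarTower 𝕜 𝕜' H]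
  {c : E → G →L[𝕜'] H} {d : E → F →L[𝕜'] G} {x : E}

theorem DifferentiableAt.clm_comp_restrictScalars (hc : DifferentiableAt 𝕜 c x)
    (hd : DifferentiableAt 𝕜 d x) : DifferentiableAt 𝕜 (fun y => (c y).comp (d y)) x :=
  ((compL 𝕜' F G H).bilinearRestrictScalars 𝕜).isBoundedBilinearMap.differentiableAt _
    |>.comp x (hc.prodMk hd)

theorem fderiv_clm_comp_apply_restrictScalars (hc : DifferentiableAt 𝕜 c x)
    (hd : DifferentiableAt 𝕜 d x) (v : E) :
    fderiv 𝕜 (fun y => (c y).comp (d y)) x v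
      = (fderiv 𝕜 c x v).comp (d x) + (c x).comp (fderiv 𝕜 d x v) := by
  have h := ((compL 𝕜' F G H).bilinearRestrictScalars 𝕜).fderiv_of_bilinear hc hd
  exact (congrArg (· v) h).trans (add_comm _ _)

end RestrictScalars

/-- The adjoint is conjugate-linear, so Mazur–Ulam makes it an `ℝ`-linear isometry. -/
theorem ContinuousLinearMap.differentiable_adjoint {E F : Type*}
    [NormedAddCommGroup E] [InnerProductSpace ℂ E] [CompleteSpace E]
    [NormedAddCommGroup F] [InnerProductSpace ℂ F] [CompleteSpace F] :
    Differentiable ℝ (adjoint : (E →L[ℂ] F) → (F →L[ℂ] E)) :=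
  (IsometryEquiv.toRealLinearIsometryEquivOfMapZero (E := E →L[ℂ] F) (F := F →L[ℂ] E)
    adjoint.toIsometryEquiv adjoint.map_zero).differentiable

section Wirtinger

variable {E : Type*} [NormedAddCommGroup E] [NormedSpace ℂ E] {f g : ℂ → E} {z : ℂ}

theorem Filter.EventuallyEq.pdbar_eq (hfg : f =ᶠ[𝓝 z] g) : pdbar f z = pdbar g z := by
  simp only [pdbar, hfg.fderiv_eq]

theorem pdbar_eq_zero_of_differentiableAt (hf : DifferentiableAt ℂ f z) : pdbar f z = 0 := by
  have hI : fderiv ℂ f z I = I • fderiv ℂ f z 1 := by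
    rw [← map_smul, smul_eq_mul, mul_one]
  simp only [pdbar, hf.fderiv_restrictScalars ℝ, coe_restrictScalars', hI, smul_smul, I_mul_I,
    neg_one_smul, add_neg_cancel, smul_zero]

variable {A B C : Type*} [NormedAddCommGroup A] [NormedSpace ℂ A]
  [NormedAddCommGroup B] [NormedSpace ℂ B] [NormedAddCommGroup C] [NormedSpace ℂ C]

theorem pdbar_clm_comp {c : ℂ → B →L[ℂ] C} {d : ℂ → A →L[ℂ] B}
    (hc : DifferentiableAt ℝ c z) (hd : DifferentiableAt ℝ d z) :
    pdbar (fun w => (c w).comp (d w)) z = (pdbar c z).comp (d z) + (c z).comp (pdbar d z) := by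
  simp only [pdbar, fderiv_clm_comp_apply_restrictScalars hc hd]
  simp only [smul_comp, comp_smul, add_comp, comp_add, smul_add]
  abel

end Wirtinger

theorem comp_inverse_comp_comp_of_isUnit {𝕜 E F : Type*} [NontriviallyNormedField 𝕜]
    [NormedAddCommGroup E] [NormedSpace 𝕜 E] [NormedAddCommGroup F] [NormedSpace 𝕜 F]
    (S : F →L[𝕜] E) (T : E →L[𝕜] F) (hST : IsUnit (S.comp T)) :
    (T.comp (Ring.inverse (S.comp T) |>.comp S)).comp T = T := by
  rw [comp_assoc, comp_assoc, ← mul_def _ (S.comp T),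
    Ring.inverse_mul_cancel _ hST, one_def, comp_id]

theorem stmt4
    {H K : Type*} [NormedAddCommGroup H] [InnerProductSpace ℂ H] [CompleteSpace H]
    [NormedAddCommGroup K] [InnerProductSpace ℂ K] [CompleteSpace K]
    (Ω : Set ℂ) (hΩ : IsOpen Ω)
    (F : ℂ → K →L[ℂ] H)
    (hF : DifferentiableOn ℂ F Ω)
    (h : ℂ → K →L[ℂ] K)
    (hdef : ∀ z ∈ Ω, h z = ContinuousLinearMap.adjoint (F z) ∘L F z)
    (hinv : ∀ z ∈ Ω, IsUnit (h z))
    (P : ℂ → H →L[ℂ] H)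
    (hP : ∀ z ∈ Ω, P z = F z ∘L Ring.inverse (h z) ∘L ContinuousLinearMap.adjoint (F z)) :
    ∀ z ∈ Ω, (pdbar P z) * P z = 0 ∧ pdbar P z = P z * pdbar P z := by
  intro z hz
  have hΩz : Ω ∈ 𝓝 z := hΩ.mem_nhds hz
  have hFz : DifferentiableAt ℂ F z := hF.differentiableAt hΩz
  have hFℝ : DifferentiableAt ℝ F z := hFz.restrictScalars ℝ
  have hF'ℝ : DifferentiableAt ℝ (fun w => adjoint (F w)) z :=
    differentiable_adjoint.differentiableAt.comp z hFℝ
  have hhℝ : DifferentiableAt ℝ h z :=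
    (hF'ℝ.clm_comp_restrictScalars hFℝ).congr_of_eventuallyEq
      (eventually_of_mem hΩz hdef)
  have hPℝ : DifferentiableAt ℝ P z :=
    (hFℝ.clm_comp_restrictScalars <| ((differentiableAt_inverse (hinv z hz)).comp z hhℝ)
      |>.clm_comp_restrictScalars hF'ℝ).congr_of_eventuallyEq (eventually_of_mem hΩz hP)
  have hPF : (fun w => P w ∘L F w) =ᶠ[𝓝 z] F := by
    filter_upwards [hΩz] with w hw
    rw [hP w hw, hdef w hw]
    exact comp_inverse_comp_comp_of_isUnit _ _ (hdef w hw ▸ hinv w hw)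
  have hPP : (fun w => P w ∘L P w) =ᶠ[𝓝 z] P := by
    filter_upwards [hPF, hΩz] with w hPFw hw
    nth_rw 2 [hP w hw]
    rw [← comp_assoc, hPFw, ← hP w hw]
  have hdPF : pdbar P z ∘L F z = 0 := by
    have := pdbar_clm_comp hPℝ hFℝ
    rwa [hPF.pdbar_eq, pdbar_eq_zero_of_differentiableAt hFz,
      comp_zero, add_zero, eq_comm] at this
  have hdPP : pdbar P z = pdbar P z * P z + P z * pdbar P z :=
    hPP.pdbar_eq.symm.trans (pdbar_clm_comp hPℝ hPℝ)
  have hdP_P : pdbar P z * P z = 0 := by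
    rw [mul_def, hP z hz, ← comp_assoc, hdPF, zero_comp]
  exact ⟨hdP_P, by rwa [hdP_P, zero_add] at hdPP⟩
end

section
/- Let P = F h^{-1} F* with F holomorphic and h = F*F invertible, and suppose G : Ω → L(H) is a smooth map of the form G = F A h^{-1} F* for some smooth A : Ω → L(K). Then ∂G − (∂P)·G − G·(∂P) = F·(∂A + [θ_P, A])·h^{-1}·F*, where θ_P = h^{-1}∂h. Consequently, if G(λ) = F(λ)(−K_{P,z^i z̄^j})h^{-1}F(λ)* then ∂G − (∂P)G − G(∂P) = F(−K_{P,z^{i+1} z̄^j})h^{-1}F*. -/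
set_option maxHeartbeats 1000000
set_option synthInstance.maxHeartbeats 200000

open Complex ContinuousLinearMap

/-- Covariant derivative in the holomorphic direction: A ↦ ∂A + [θ, A]. -/
noncomputable def covz {E : Type*} [NormedRing E] [NormedAlgebra ℂ E]
    (θ : ℂ → E) (X : ℂ → E) : ℂ → E :=
  fun z => pd X z + (θ z * X z - X z * θ z)

/-- Covariant partial derivatives of curvature K_{P, z^i z̄^j}. -/
noncomputable def Kij {E : Type*} [NormedRing E] [NormedAlgebra ℂ E]
    (θ KP : ℂ → E) (i j : ℕ) : ℂ → E :=
  (covz θ)^[i] (pdbar^[j] KP)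

section infra

variable {E E₁ E₂ E₃ : Type*} [NormedAddCommGroup E] [NormedSpace ℂ E]
  [NormedAddCommGroup E₁] [NormedSpace ℂ E₁]
  [NormedAddCommGroup E₂] [NormedSpace ℂ E₂]
  [NormedAddCommGroup E₃] [NormedSpace ℂ E₃]

lemma pd_congr {f g : ℂ → E} {z : ℂ} (h : f =ᶠ[nhds z] g) : pd f z = pd g z := by
  unfold pd; rw [h.fderiv_eq]

lemma pd_const {c : E} {z : ℂ} : pd (fun _ => c) z = 0 := by
  simp [pd, fderiv_const]

lemma pd_neg {f : ℂ → E} {z : ℂ} : pd (fun w => -f w) z = -pd f z := by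
  simp only [pd, fderiv_neg]
  simp [smul_sub]
  module

lemma pd_holo {f : ℂ → E} {z : ℂ} (hf : DifferentiableAt ℂ f z) :
    pd f z = fderiv ℝ f z 1 ∧ fderiv ℝ f z Complex.I = Complex.I • fderiv ℝ f z 1 := by
  have h1 : fderiv ℝ f z = (fderiv ℂ f z).restrictScalars ℝ :=
    hf.fderiv_restrictScalars ℝ
  have h2 : fderiv ℝ f z Complex.I = Complex.I • fderiv ℝ f z 1 := by
    rw [h1]
    simp only [ContinuousLinearMap.coe_restrictScalars']
    have : (Complex.I : ℂ) = Complex.I • (1 : ℂ) := by simp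
    rw [this, (fderiv ℂ f z).map_smul]
    simp
  refine ⟨?_, h2⟩
  rw [pd, h2, smul_smul, Complex.I_mul_I]
  module

lemma pd_bilin (B : E₁ →L[ℝ] E₂ →L[ℝ] E₃)
    (hBl : ∀ x y, B (Complex.I • x) y = Complex.I • B x y)
    (hBr : ∀ x y, B x (Complex.I • y) = Complex.I • B x y)
    {f : ℂ → E₁} {g : ℂ → E₂} {z : ℂ}
    (hf : DifferentiableAt ℝ f z) (hg : DifferentiableAt ℝ g z) :
    pd (fun w => B (f w) (g w)) z = B (pd f z) (g z) + B (f z) (pd g z) := by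
  have hd : HasFDerivAt (fun w => B (f w) (g w))
      (((B.isBoundedBilinearMap).deriv (f z, g z)).comp
        ((fderiv ℝ f z).prod (fderiv ℝ g z))) z :=
    ((B.isBoundedBilinearMap.hasFDerivAt (f z, g z)).comp (f := fun w => (f w, g w)) z
      (hf.hasFDerivAt.prodMk hg.hasFDerivAt))
  rw [pd, hd.fderiv]
  simp only [ContinuousLinearMap.coe_comp', Function.comp_apply,
    ContinuousLinearMap.prod_apply, IsBoundedBilinearMap.deriv_apply]
  unfold pd
  have e2 : (2⁻¹ : ℂ) = ((2⁻¹ : ℝ) : ℂ) := by norm_num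
  rw [e2]
  simp only [Complex.coe_smul, map_smul, map_sub, ContinuousLinearMap.smul_apply,
    ContinuousLinearMap.sub_apply, ContinuousLinearMap.add_apply, hBl, hBr]
  rw [← Complex.coe_smul, ← e2]
  set p1 := B (fderiv ℝ f z 1) (g z)
  set p2 := B (f z) (fderiv ℝ g z 1)
  set q1 := B (fderiv ℝ f z Complex.I) (g z)
  set q2 := B (f z) (fderiv ℝ g z Complex.I)
  module

lemma diffAt_bilin (B : E₁ →L[ℝ] E₂ →L[ℝ] E₃)
    {f : ℂ → E₁} {g : ℂ → E₂} {z : ℂ}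
    (hf : DifferentiableAt ℝ f z) (hg : DifferentiableAt ℝ g z) :
    DifferentiableAt ℝ (fun w => B (f w) (g w)) z :=
  (B.isBoundedBilinearMap.differentiableAt (f z, g z)).comp (f := fun w => (f w, g w)) z (hf.prodMk hg)

lemma pd_mul {A : Type*} [NormedRing A] [NormedAlgebra ℂ A] {f g : ℂ → A} {z : ℂ}
    (hf : DifferentiableAt ℝ f z) (hg : DifferentiableAt ℝ g z) :
    pd (fun w => f w * g w) z = pd f z * g z + f z * pd g z := by
  have := pd_bilin (ContinuousLinearMap.mul ℝ A)
    (fun x y => by simp [smul_mul_assoc]) (fun x y => by simp [mul_smul_comm]) hf hg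
  simpa using this

/-- composition as a real-bilinear CLM between ℂ-CLM spaces -/
noncomputable def compR {E F G : Type*} [NormedAddCommGroup E] [NormedSpace ℂ E]
    [NormedAddCommGroup F] [NormedSpace ℂ F] [NormedAddCommGroup G] [NormedSpace ℂ G] :
    (F →L[ℂ] G) →L[ℝ] (E →L[ℂ] F) →L[ℝ] (E →L[ℂ] G) :=
  LinearMap.mkContinuous₂
    { toFun := fun u =>
        { toFun := fun v => u ∘L v
          map_add' := fun v₁ v₂ => ContinuousLinearMap.comp_add u v₁ v₂
          map_smul' := fun r v => by
            ext x
            simp [ContinuousLinearMap.map_smul_of_tower] }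
      map_add' := fun u₁ u₂ => LinearMap.ext fun v => by
        ext x; simp
      map_smul' := fun r u => LinearMap.ext fun v => by
        ext x; simp }
    1 (fun u v => by simpa using ContinuousLinearMap.opNorm_comp_le u v)

@[simp] lemma compR_apply {E F G : Type*} [NormedAddCommGroup E] [NormedSpace ℂ E]
    [NormedAddCommGroup F] [NormedSpace ℂ F] [NormedAddCommGroup G] [NormedSpace ℂ G]
    (u : F →L[ℂ] G) (v : E →L[ℂ] F) : (compR u) v = u ∘L v := by
  unfold compR
  rfl

lemma compR_Il {E F G : Type*} [NormedAddCommGroup E] [NormedSpace ℂ E]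
    [NormedAddCommGroup F] [NormedSpace ℂ F] [NormedAddCommGroup G] [NormedSpace ℂ G]
    (u : F →L[ℂ] G) (v : E →L[ℂ] F) :
    compR (Complex.I • u) v = Complex.I • compR u v := by
  simp [smul_comp]

lemma compR_Ir {E F G : Type*} [NormedAddCommGroup E] [NormedSpace ℂ E]
    [NormedAddCommGroup F] [NormedSpace ℂ F] [NormedAddCommGroup G] [NormedSpace ℂ G]
    (u : F →L[ℂ] G) (v : E →L[ℂ] F) :
    compR u (Complex.I • v) = Complex.I • compR u v := by
  simp [comp_smul]

end infra

section adjsec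

variable (E F : Type*) [NormedAddCommGroup E] [InnerProductSpace ℂ E] [CompleteSpace E]
  [NormedAddCommGroup F] [InnerProductSpace ℂ F] [CompleteSpace F]

/-- adjoint as a real CLM -/
noncomputable def adjR : (E →L[ℂ] F) →L[ℝ] (F →L[ℂ] E) where
  toFun := fun T => ContinuousLinearMap.adjoint T
  map_add' := fun x y => map_add _ x y
  map_smul' := fun r T => by
    show ContinuousLinearMap.adjoint ((r : ℝ) • T) = r • ContinuousLinearMap.adjoint T
    rw [show (r : ℝ) • T = ((r : ℂ)) • T from (Complex.coe_smul r T).symm,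
      LinearIsometryEquiv.map_smulₛₗ]
    simp [Complex.coe_smul]
  cont := (ContinuousLinearMap.adjoint (𝕜 := ℂ) (E := E) (F := F)).toLinearIsometry.continuous

@[simp] lemma adjR_apply (T : E →L[ℂ] F) :
    adjR E F T = ContinuousLinearMap.adjoint T := rfl

lemma adjR_smul_I (T : E →L[ℂ] F) :
    adjR E F (Complex.I • T) = -(Complex.I • adjR E F T) := by
  simp [LinearIsometryEquiv.map_smulₛₗ]

lemma pd_adjR {Fn : ℂ → E →L[ℂ] F} {z : ℂ} (hf : DifferentiableAt ℂ Fn z) :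
    pd (fun w => adjR E F (Fn w)) z = 0 := by
  have hR : DifferentiableAt ℝ Fn z := hf.restrictScalars ℝ
  have hd : HasFDerivAt (fun w => adjR E F (Fn w))
      ((adjR E F).comp (fderiv ℝ Fn z)) z :=
    ((adjR E F).hasFDerivAt).comp z hR.hasFDerivAt
  have h2 : fderiv ℝ Fn z Complex.I = Complex.I • fderiv ℝ Fn z 1 := by
    have h1 : fderiv ℝ Fn z = (fderiv ℂ Fn z).restrictScalars ℝ :=
      hf.fderiv_restrictScalars ℝ
    rw [h1]
    have : (Complex.I : ℂ) = Complex.I • (1 : ℂ) := by simp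
    simp only [ContinuousLinearMap.coe_restrictScalars']
    rw [this, (fderiv ℂ Fn z).map_smul]
    simp
  rw [pd, hd.fderiv]
  simp only [ContinuousLinearMap.coe_comp', Function.comp_apply, h2, adjR_smul_I]
  simp [smul_smul, smul_neg, Complex.I_mul_I]

end adjsec

section smooth

variable {E E₁ E₂ E₃ : Type*} [NormedAddCommGroup E] [NormedSpace ℂ E]
  [NormedAddCommGroup E₁] [NormedSpace ℂ E₁]
  [NormedAddCommGroup E₂] [NormedSpace ℂ E₂]
  [NormedAddCommGroup E₃] [NormedSpace ℂ E₃]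
  {Ω : Set ℂ}

lemma contDiffOn_fderiv1 (hΩ : IsOpen Ω) {f : ℂ → E} (hf : ContDiffOn ℝ (⊤ : ℕ∞) f Ω) (v : ℂ) :
    ContDiffOn ℝ (⊤ : ℕ∞) (fun z => fderiv ℝ f z v) Ω :=
  (hf.fderiv_of_isOpen hΩ (by simp)).clm_apply contDiffOn_const

lemma ContDiffOn.pd' (hΩ : IsOpen Ω) {f : ℂ → E} (hf : ContDiffOn ℝ (⊤ : ℕ∞) f Ω) :
    ContDiffOn ℝ (⊤ : ℕ∞) (pd f) Ω := by
  unfold pd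
  exact (((contDiffOn_fderiv1 hΩ hf 1).sub
    ((contDiffOn_fderiv1 hΩ hf Complex.I).const_smul Complex.I)).const_smul (2⁻¹ : ℂ))

lemma ContDiffOn.pdbar' (hΩ : IsOpen Ω) {f : ℂ → E} (hf : ContDiffOn ℝ (⊤ : ℕ∞) f Ω) :
    ContDiffOn ℝ (⊤ : ℕ∞) (pdbar f) Ω := by
  unfold pdbar
  exact (((contDiffOn_fderiv1 hΩ hf 1).add
    ((contDiffOn_fderiv1 hΩ hf Complex.I).const_smul Complex.I)).const_smul (2⁻¹ : ℂ))

lemma contDiffOn_bilin (B : E₁ →L[ℝ] E₂ →L[ℝ] E₃) {f : ℂ → E₁} {g : ℂ → E₂}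
    (hf : ContDiffOn ℝ (⊤ : ℕ∞) f Ω) (hg : ContDiffOn ℝ (⊤ : ℕ∞) g Ω) :
    ContDiffOn ℝ (⊤ : ℕ∞) (fun w => B (f w) (g w)) Ω :=
  (B.isBoundedBilinearMap.contDiff).comp_contDiffOn (hf.prodMk hg)


lemma pd_comp2 {E F G : Type*} [NormedAddCommGroup E] [NormedSpace ℂ E]
    [NormedAddCommGroup F] [NormedSpace ℂ F] [NormedAddCommGroup G] [NormedSpace ℂ G]
    {f : ℂ → F →L[ℂ] G} {g : ℂ → E →L[ℂ] F} {z : ℂ}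
    (hf : DifferentiableAt ℝ f z) (hg : DifferentiableAt ℝ g z) :
    pd (fun w => f w ∘L g w) z = pd f z ∘L g z + f z ∘L pd g z := by
  have h0 : (fun w => f w ∘L g w) = fun w => compR (f w) (g w) :=
    funext fun w => (compR_apply _ _).symm
  rw [h0, pd_bilin compR compR_Il compR_Ir hf hg, compR_apply, compR_apply]

lemma diffAt_comp2 {E F G : Type*} [NormedAddCommGroup E] [NormedSpace ℂ E]
    [NormedAddCommGroup F] [NormedSpace ℂ F] [NormedAddCommGroup G] [NormedSpace ℂ G]
    {f : ℂ → F →L[ℂ] G} {g : ℂ → E →L[ℂ] F} {z : ℂ}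
    (hf : DifferentiableAt ℝ f z) (hg : DifferentiableAt ℝ g z) :
    DifferentiableAt ℝ (fun w => f w ∘L g w) z := by
  have h0 : (fun w => f w ∘L g w) = fun w => compR (f w) (g w) :=
    funext fun w => (compR_apply _ _).symm
  rw [h0]; exact diffAt_bilin compR hf hg

lemma contDiffOn_comp2 {E F G : Type*} [NormedAddCommGroup E] [NormedSpace ℂ E]
    [NormedAddCommGroup F] [NormedSpace ℂ F] [NormedAddCommGroup G] [NormedSpace ℂ G]
    {f : ℂ → F →L[ℂ] G} {g : ℂ → E →L[ℂ] F} {Ω : Set ℂ}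
    (hf : ContDiffOn ℝ (⊤ : ℕ∞) f Ω) (hg : ContDiffOn ℝ (⊤ : ℕ∞) g Ω) :
    ContDiffOn ℝ (⊤ : ℕ∞) (fun w => f w ∘L g w) Ω := by
  have h0 : (fun w => f w ∘L g w) = fun w => compR (f w) (g w) :=
    funext fun w => (compR_apply _ _).symm
  rw [h0]; exact contDiffOn_bilin compR hf hg


end smooth
set_option maxHeartbeats 2000000 in
theorem stmt11
    {H K : Type*} [NormedAddCommGroup H] [InnerProductSpace ℂ H] [CompleteSpace H]
    [NormedAddCommGroup K] [InnerProductSpace ℂ K] [CompleteSpace K]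
    (Ω : Set ℂ) (hΩ : IsOpen Ω)
    (F : ℂ → K →L[ℂ] H)
    (hF : DifferentiableOn ℂ F Ω)
    (h : ℂ → K →L[ℂ] K)
    (hdef : ∀ z ∈ Ω, h z = ContinuousLinearMap.adjoint (F z) ∘L F z)
    (hinv : ∀ z ∈ Ω, IsUnit (h z))
    (hi : ℂ → K →L[ℂ] K) (hhi : ∀ z ∈ Ω, hi z = Ring.inverse (h z))
    (P : ℂ → H →L[ℂ] H)
    (hP : ∀ z ∈ Ω, P z = F z ∘L hi z ∘L ContinuousLinearMap.adjoint (F z))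
    (KP : ℂ → K →L[ℂ] K)
    (hKP : ∀ z ∈ Ω, KP z = -(pdbar (fun w => hi w * pd h w) z))
    (θ : ℂ → K →L[ℂ] K) (hθ : ∀ z ∈ Ω, θ z = hi z * pd h z)
    : (∀ (A : ℂ → K →L[ℂ] K), ContDiffOn ℝ (⊤ : ℕ∞) A Ω →
        ∀ (G : ℂ → H →L[ℂ] H),
          (∀ z, G z = F z ∘L (A z * hi z) ∘L ContinuousLinearMap.adjoint (F z)) →
          ∀ z ∈ Ω,
            pd G z - pd P z * G z - G z * pd P z =
              F z ∘L (covz θ A z * hi z) ∘L ContinuousLinearMap.adjoint (F z)) ∧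
      (∀ (i j : ℕ) (G : ℂ → H →L[ℂ] H),
        (∀ z, G z = F z ∘L ((-(Kij θ KP i j z)) * hi z) ∘L
          ContinuousLinearMap.adjoint (F z)) →
        ∀ z ∈ Ω,
          pd G z - pd P z * G z - G z * pd P z =
            F z ∘L ((-(Kij θ KP (i + 1) j z)) * hi z) ∘L
              ContinuousLinearMap.adjoint (F z)) := by
  -- smoothness of the basic data
  have sF : ContDiffOn ℝ (⊤ : ℕ∞) F Ω :=
    ContDiffOn.restrict_scalars ℝ ((hF.analyticOn hΩ).contDiffOn hΩ.uniqueDiffOn)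
  have sFs : ContDiffOn ℝ (⊤ : ℕ∞) (fun w => adjR K H (F w)) Ω :=
    (adjR K H).contDiff.comp_contDiffOn sF
  have sh : ContDiffOn ℝ (⊤ : ℕ∞) h Ω :=
    (contDiffOn_comp2 sFs sF).congr (fun z hz => hdef z hz)
  have shi : ContDiffOn ℝ (⊤ : ℕ∞) hi Ω := by
    intro z hz
    have hu := hinv z hz
    have h1 : ContDiffAt ℝ (⊤ : ℕ∞) Ring.inverse (h z) := by
      obtain ⟨u, hu'⟩ := hu
      exact hu' ▸ contDiffAt_ringInverse ℝ u
    have h2 : ContDiffAt ℝ (⊤ : ℕ∞) h z := sh.contDiffAt (hΩ.mem_nhds hz)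
    have h3 : ContDiffAt ℝ (⊤ : ℕ∞) (fun w => Ring.inverse (h w)) z := h1.comp z h2
    have h4 : hi =ᶠ[nhds z] fun w => Ring.inverse (h w) :=
      Filter.eventuallyEq_of_mem (hΩ.mem_nhds hz) (fun w hw => hhi w hw)
    exact (h3.congr_of_eventuallyEq h4).contDiffWithinAt
  have sθ : ContDiffOn ℝ (⊤ : ℕ∞) θ Ω := ((shi.mul (sh.pd' hΩ)).congr hθ)
  have sKP : ContDiffOn ℝ (⊤ : ℕ∞) KP Ω :=
    (((shi.mul (sh.pd' hΩ)).pdbar' hΩ).neg).congr hKP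
  have scovz : ∀ X : ℂ → K →L[ℂ] K, ContDiffOn ℝ (⊤ : ℕ∞) X Ω → ContDiffOn ℝ (⊤ : ℕ∞) (covz θ X) Ω := by
    intro X sX
    unfold covz
    exact (sX.pd' hΩ).add ((sθ.mul sX).sub (sX.mul sθ))
  have sKij : ∀ i j, ContDiffOn ℝ (⊤ : ℕ∞) (Kij θ KP i j) Ω := by
    have base : ∀ j, ContDiffOn ℝ (⊤ : ℕ∞) (pdbar^[j] KP) Ω := by
      intro j; induction j with
      | zero => simpa using sKP
      | succ j ih =>
        rw [Function.iterate_succ_apply']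
        exact ih.pdbar' hΩ
    intro i j
    induction i with
    | zero => simpa [Kij] using base j
    | succ i ih =>
      have : Kij θ KP (i + 1) j = covz θ (Kij θ KP i j) := by
        unfold Kij; rw [Function.iterate_succ_apply']
      rw [this]
      exact scovz _ ih
  -- the key computation
  have key : ∀ (A : ℂ → K →L[ℂ] K), (∀ z ∈ Ω, DifferentiableAt ℝ A z) →
      ∀ (G : ℂ → H →L[ℂ] H),
        (∀ z, G z = F z ∘L (A z * hi z) ∘L ContinuousLinearMap.adjoint (F z)) →
        ∀ z ∈ Ω,
          pd G z - pd P z * G z - G z * pd P z =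
            F z ∘L (covz θ A z * hi z) ∘L ContinuousLinearMap.adjoint (F z) := by
    intro A dA G hG z hz
    have hmem : Ω ∈ nhds z := hΩ.mem_nhds hz
    have hFz : DifferentiableAt ℂ F z := hF.differentiableAt hmem
    have dF : DifferentiableAt ℝ F z := hFz.restrictScalars ℝ
    have dFs : DifferentiableAt ℝ (fun w => adjR K H (F w)) z :=
      ((adjR K H).differentiable.differentiableAt).comp z dF
    have dh : DifferentiableAt ℝ h z := (sh.differentiableOn (by simp)).differentiableAt hmem
    have dhi : DifferentiableAt ℝ hi z := (shi.differentiableOn (by simp)).differentiableAt hmem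
    have dAz : DifferentiableAt ℝ A z := dA z hz
    have pdFs0 : pd (fun w => adjR K H (F w)) z = 0 := pd_adjR K H hFz
    have hhev : h =ᶠ[nhds z] fun w => adjR K H (F w) ∘L F w :=
      Filter.eventuallyEq_of_mem hmem (fun w hw => hdef w hw)
    have pdh : pd h z = ContinuousLinearMap.adjoint (F z) ∘L pd F z := by
      have t2 := pd_comp2 (f := fun w => adjR K H (F w)) (g := F) dFs dF
      rw [pd_congr hhev, t2, pdFs0]
      simp
    have honeh : (fun w => hi w * h w) =ᶠ[nhds z] (fun _ => (1 : K →L[ℂ] K)) :=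
      Filter.eventuallyEq_of_mem hmem
        (fun w hw => by rw [hhi w hw, Ring.inverse_mul_cancel _ (hinv w hw)])
    have h0 : pd hi z * h z + hi z * pd h z = 0 := by
      rw [← pd_mul dhi dh, pd_congr honeh, pd_const]
    have hzhi : h z * hi z = 1 := by
      rw [hhi z hz]; exact Ring.mul_inverse_cancel _ (hinv z hz)
    have hihz : hi z * h z = 1 := by
      rw [hhi z hz]; exact Ring.inverse_mul_cancel _ (hinv z hz)
    have pdhi : pd hi z = -(hi z * pd h z * hi z) := by
      have h1 : pd hi z * h z = -(hi z * pd h z) := eq_neg_of_add_eq_zero_left h0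
      calc pd hi z = pd hi z * (h z * hi z) := by rw [hzhi, mul_one]
        _ = pd hi z * h z * hi z := by rw [mul_assoc]
        _ = -(hi z * pd h z) * hi z := by rw [h1]
        _ = -(hi z * pd h z * hi z) := by rw [neg_mul]
    have dInner : DifferentiableAt ℝ (fun w => F w ∘L hi w) z := diffAt_comp2 dF dhi
    have hPev : P =ᶠ[nhds z] fun w => (F w ∘L hi w) ∘L adjR K H (F w) :=
      Filter.eventuallyEq_of_mem hmem
        (fun w hw => by rw [hP w hw]; exact (ContinuousLinearMap.comp_assoc _ _ _).symm)
    have pdP : pd P z = pd F z ∘L (hi z ∘L ContinuousLinearMap.adjoint (F z))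
        + F z ∘L (pd hi z ∘L ContinuousLinearMap.adjoint (F z)) := by
      have t1 := pd_comp2 (f := fun w => F w ∘L hi w) (g := fun w => adjR K H (F w)) dInner dFs
      have t2 := pd_comp2 (f := F) (g := hi) dF dhi
      rw [pd_congr hPev, t1, t2, pdFs0]
      simp [ContinuousLinearMap.add_comp, ContinuousLinearMap.comp_assoc]
    have dX : DifferentiableAt ℝ (fun w => A w * hi w) z := dAz.mul dhi
    have pdX : pd (fun w => A w * hi w) z = pd A z * hi z + A z * pd hi z := pd_mul dAz dhi
    have dFA : DifferentiableAt ℝ (fun w => F w ∘L (A w * hi w)) z := diffAt_comp2 dF dX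
    have hGev : G =ᶠ[nhds z] fun w => (F w ∘L (A w * hi w)) ∘L adjR K H (F w) :=
      Filter.Eventually.of_forall
        (fun w => by rw [hG w]; exact (ContinuousLinearMap.comp_assoc _ _ _).symm)
    have pdG : pd G z = pd F z ∘L ((A z * hi z) ∘L ContinuousLinearMap.adjoint (F z))
        + F z ∘L ((pd A z * hi z + A z * pd hi z) ∘L ContinuousLinearMap.adjoint (F z)) := by
      have t1 := pd_comp2 (f := fun w => F w ∘L (A w * hi w)) (g := fun w => adjR K H (F w)) dFA dFs
      have t2 := pd_comp2 (f := F) (g := fun w => A w * hi w) dF dX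
      rw [pd_congr hGev, t1, t2, pdX, pdFs0]
      simp [ContinuousLinearMap.add_comp, ContinuousLinearMap.comp_assoc]
    have hba2 : ∀ (w : H →L[ℂ] K),
        ContinuousLinearMap.adjoint (F z) ∘L (F z ∘L w) = h z ∘L w := fun w => by
      rw [← ContinuousLinearMap.comp_assoc, ← hdef z hz]
    have heta2 : ∀ (w : H →L[ℂ] K),
        ContinuousLinearMap.adjoint (F z) ∘L (pd F z ∘L w) = pd h z ∘L w := fun w => by
      rw [← ContinuousLinearMap.comp_assoc, ← pdh]
    have L1 : ∀ (w : H →L[ℂ] K), hi z ∘L (h z ∘L w) = w := fun w => by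
      rw [← ContinuousLinearMap.comp_assoc,
        show hi z ∘L h z = 1 from by rw [← ContinuousLinearMap.mul_def, hihz]]
      simp [ContinuousLinearMap.one_def]
    rw [pdG, pdP, hG z, pdhi]
    unfold covz
    simp only [hθ z hz, ContinuousLinearMap.mul_def,
      ContinuousLinearMap.add_comp, ContinuousLinearMap.comp_add,
      ContinuousLinearMap.sub_comp, ContinuousLinearMap.comp_sub,
      ContinuousLinearMap.neg_comp, ContinuousLinearMap.comp_neg,
      ContinuousLinearMap.comp_assoc, hba2, heta2, L1]
    abel
  constructor
  · intro A sA G hG z hz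
    exact key A
      (fun w hw => ((sA.differentiableOn (by simp)).differentiableAt (hΩ.mem_nhds hw))) G hG z hz
  · intro i j G hG z hz
    have dA : ∀ w ∈ Ω, DifferentiableAt ℝ (fun t => -Kij θ KP i j t) w := fun w hw =>
      (((sKij i j).differentiableOn (by simp)).differentiableAt (hΩ.mem_nhds hw)).neg
    have hmain := key (fun t => -Kij θ KP i j t) dA G hG z hz
    rw [hmain]
    have hsucc : Kij θ KP (i + 1) j = covz θ (Kij θ KP i j) := by
      unfold Kij; rw [Function.iterate_succ_apply']
    have heq : covz θ (fun t => -Kij θ KP i j t) z = -Kij θ KP (i + 1) j z := by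
      rw [hsucc]
      show covz θ (fun t => -Kij θ KP i j t) z = -covz θ (Kij θ KP i j) z
      unfold covz
      rw [pd_neg]
      simp [mul_neg, neg_mul]
      abel
    rw [heq]
end
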